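/- Assume P is the identity matrix and X_{i,j} = 0 whenever dist(i,j) > R. For all i, j ∈ L and all t ∈ ℝ, both |C^{xp}_{i,j}(t)| and |C^{px}_{i,j}(t)| are bounded above by τ^{2⌈d_{i,j}⌉} · cosh(τ)/(2⌈d_{i,j}⌉)!. -/

import Mathlib

/-- The ℓ²→ℓ² operator norm of a real matrix. -/
noncomputable def l2OpNorm {V : Type*} [Fintype V] [DecidableEq V] (M : Matrix V V ℝ) : ℝ :=
  ‖Matrix.toEuclideanCLM (𝕜 := ℝ) M‖

/-- For `P = 𝟙`: `C^{xp}_{i,j}(t) = −∑_{n≥0} (−1)^n t^{2n} (X^n)_{i,j}/(2n)!`,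
which equals `i[x̂_i(t), p̂_j]`. -/
noncomputable def Cxp {V : Type*} [Fintype V] [DecidableEq V]
    (X : Matrix V V ℝ) (i j : V) (t : ℝ) : ℝ :=
  -∑' n : ℕ, (-1 : ℝ) ^ n * t ^ (2 * n) * ((X ^ n) i j) / (Nat.factorial (2 * n))

/-- For `P = 𝟙`: `C^{px}_{i,j}(t) = ∑_{n≥0} (−1)^n t^{2n} (X^n)_{i,j}/(2n)!`,
which equals `i[p̂_i(t), x̂_j]`. -/
noncomputable def Cpx {V : Type*} [Fintype V] [DecidableEq V]
    (X : Matrix V V ℝ) (i j : V) (t : ℝ) : ℝ :=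
  ∑' n : ℕ, (-1 : ℝ) ^ n * t ^ (2 * n) * ((X ^ n) i j) / (Nat.factorial (2 * n))

/-!
Both commutators are, up to sign, the entry `(i, j)` of `cos(t√X) = ∑ (-1)ⁿ t²ⁿ Xⁿ / (2n)!`.
Each term is bounded by `τ²ⁿ / (2n)!`, since matrix entries are bounded by the operator norm.
A coupling of range `R` links only sites at distance `≤ R`, so `(Xⁿ)ᵢⱼ = 0` as long as
`R n < dist(i, j)`: the first `c = ⌈dist(i, j) / R⌉` terms vanish. The remaining tail is at most
`∑_{m} τ^{2(m+c)} / (2(m+c))! ≤ τ^{2c} / (2c)! · ∑_m τ^{2m} / (2m)! = τ^{2c} cosh τ / (2c)!`.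
-/

open scoped Nat

section MatrixBounds

variable {V : Type*} [Fintype V] [DecidableEq V]

lemma abs_apply_le_l2OpNorm (M : Matrix V V ℝ) (i j : V) : |M i j| ≤ l2OpNorm M := by
  set T := Matrix.toEuclideanCLM (𝕜 := ℝ) M
  have hcol : T (EuclideanSpace.single j 1) i = M i j := by
    simp [T, Matrix.ofLp_toEuclideanCLM, Matrix.mulVec_single]
  calc |M i j| = ‖T (EuclideanSpace.single j 1) i‖ := by rw [hcol, Real.norm_eq_abs]
    _ ≤ ‖T (EuclideanSpace.single j 1)‖ := PiLp.norm_apply_le _ i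
    _ ≤ ‖T‖ * ‖EuclideanSpace.single j (1 : ℝ)‖ := T.le_opNorm _
    _ = l2OpNorm M := by rw [PiLp.norm_single, norm_one, mul_one]; rfl

lemma abs_pow_apply_le_l2OpNorm_pow (M : Matrix V V ℝ) (n : ℕ) (i j : V) :
    |(M ^ n) i j| ≤ l2OpNorm M ^ n := by
  rcases Nat.eq_zero_or_pos n with rfl | hn
  · rw [pow_zero, pow_zero, Matrix.one_apply]
    split_ifs <;> simp
  · calc |(M ^ n) i j| ≤ l2OpNorm (M ^ n) := abs_apply_le_l2OpNorm _ i j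
      _ ≤ l2OpNorm M ^ n := by
        unfold l2OpNorm
        rw [map_pow]
        exact norm_pow_le' _ hn

lemma pow_apply_eq_zero_of_mul_lt_dist {G : SimpleGraph V} (hconn : G.Connected) {R : ℕ}
    {X : Matrix V V ℝ} (hXloc : ∀ i j : V, R < G.dist i j → X i j = 0) (n : ℕ) :
    ∀ {i j : V}, R * n < G.dist i j → (X ^ n) i j = 0 := by
  induction n with
  | zero =>
    intro i j h
    have hij : i ≠ j := by
      rintro rfl
      simp at h
    simp [Matrix.one_apply_ne hij]
  | succ n ih =>
    intro i j h
    rw [pow_succ', Matrix.mul_apply]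
    refine Finset.sum_eq_zero fun k _ => ?_
    by_cases hik : R < G.dist i k
    · rw [hXloc i k hik, zero_mul]
    · have htri := hconn.dist_triangle (u := i) (v := k) (w := j)
      have hkj : R * n < G.dist k j := by
        rw [Nat.mul_succ] at h
        omega
      rw [ih hkj, mul_zero]

end MatrixBounds

lemma pow_add_div_factorial_le {x : ℝ} (hx : 0 ≤ x) (k l : ℕ) :
    x ^ (k + l) / (k + l)! ≤ x ^ k / k ! * (x ^ l / l !) := by
  rw [div_mul_div_comm, ← pow_add]
  gcongr
  exact_mod_cast Nat.le_of_dvd (Nat.factorial_pos _) (Nat.factorial_mul_factorial_dvd_factorial_add k l)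

lemma abs_tsum_le_pow_mul_cosh_div_factorial {a : ℕ → ℝ} {x : ℝ} {c : ℕ} (hx : 0 ≤ x)
    (ha : ∀ n, |a n| ≤ x ^ (2 * n) / (2 * n)!) (hvanish : ∀ n < c, a n = 0) :
    |∑' n, a n| ≤ x ^ (2 * c) * Real.cosh x / (2 * c)! := by
  have hcosh := Real.hasSum_cosh x
  have habs : Summable fun n => |a n| :=
    hcosh.summable.of_nonneg_of_le (fun n => abs_nonneg _) ha
  have hshift : ∑' n, a n = ∑' m, a (m + c) := by
    rw [← habs.of_abs.sum_add_tsum_nat_add c,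
      Finset.sum_eq_zero fun n hn => hvanish n (Finset.mem_range.mp hn), zero_add]
  have htail : ∀ m, |a (m + c)| ≤ x ^ (2 * m) / (2 * m)! * (x ^ (2 * c) / (2 * c)!) := by
    intro m
    have := pow_add_div_factorial_le hx (2 * m) (2 * c)
    rw [← mul_add] at this
    exact (ha (m + c)).trans this
  calc |∑' n, a n| = ‖∑' m, a (m + c)‖ := by rw [hshift, Real.norm_eq_abs]
    _ ≤ ∑' m, |a (m + c)| := norm_tsum_le_tsum_norm ((summable_nat_add_iff c).mpr habs)
    _ ≤ ∑' m, x ^ (2 * m) / (2 * m)! * (x ^ (2 * c) / (2 * c)!) :=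
      ((summable_nat_add_iff c).mpr habs).tsum_le_tsum htail (hcosh.summable.mul_right _)
    _ = x ^ (2 * c) * Real.cosh x / (2 * c)! := by
      rw [tsum_mul_right, hcosh.tsum_eq]
      ring

lemma abs_cos_series_term_le {V : Type*} [Fintype V] [DecidableEq V]
    (X : Matrix V V ℝ) (i j : V) (t : ℝ) (n : ℕ) :
    |(-1 : ℝ) ^ n * t ^ (2 * n) * (X ^ n) i j / (2 * n)!|
      ≤ (Real.sqrt (l2OpNorm X) * |t|) ^ (2 * n) / (2 * n)! := by
  have hK : 0 ≤ l2OpNorm X := norm_nonneg _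
  have hτ : (Real.sqrt (l2OpNorm X) * |t|) ^ (2 * n) = t ^ (2 * n) * l2OpNorm X ^ n := by
    rw [mul_pow, pow_mul, Real.sq_sqrt hK, (even_two_mul n).pow_abs]
    ring
  rw [hτ, abs_div, abs_mul, abs_mul, abs_pow, abs_neg, abs_one, one_pow, one_mul,
    abs_of_nonneg ((even_two_mul n).pow_nonneg t), Nat.abs_cast]
  gcongr
  · exact (even_two_mul n).pow_nonneg t
  · exact abs_pow_apply_le_l2OpNorm_pow X n i j

lemma mul_lt_of_lt_toNat_ceil_div {d R n : ℕ} (h : n < (⌈(d : ℝ) / R⌉).toNat) : R * n < d := by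
  rcases Nat.eq_zero_or_pos R with rfl | hR
  · simp at h
  · have hn : (n : ℝ) < d / R := Int.lt_ceil.mp (by exact_mod_cast Int.lt_toNat.mp h)
    rw [lt_div_iff₀ (by exact_mod_cast hR), mul_comm] at hn
    exact_mod_cast hn

theorem lieb_robinson_local_P_one_xp_px_general {V : Type*} [Fintype V] [DecidableEq V]
    (G : SimpleGraph V) (hconn : G.Connected) (R : ℕ)
    (X : Matrix V V ℝ)
    (hXloc : ∀ i j : V, R < G.dist i j → X i j = 0)
    (i j : V) (t : ℝ) :
    let τ : ℝ := Real.sqrt (l2OpNorm X) * |t|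
    let c : ℕ := (⌈(G.dist i j : ℝ) / R⌉).toNat
    |Cxp X i j t| ≤ τ ^ (2 * c) * Real.cosh τ / (Nat.factorial (2 * c)) ∧
    |Cpx X i j t| ≤ τ ^ (2 * c) * Real.cosh τ / (Nat.factorial (2 * c)) := by
  intro τ c
  have hpx : |Cpx X i j t| ≤ τ ^ (2 * c) * Real.cosh τ / (2 * c)! :=
    abs_tsum_le_pow_mul_cosh_div_factorial (by positivity) (abs_cos_series_term_le X i j t)
      fun n hn => by
        simp [pow_apply_eq_zero_of_mul_lt_dist hconn hXloc n (mul_lt_of_lt_toNat_ceil_div hn)]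
  have hxp : |Cxp X i j t| = |Cpx X i j t| := abs_neg _
  exact ⟨hxp ▸ hpx, hpx⟩

/-- **Lieb-Robinson bound for local couplings and `P = 𝟙`**, `xp` and `px` commutators:
both `|C^{xp}_{i,j}(t)|` and `|C^{px}_{i,j}(t)|` are bounded by
`τ^{2⌈d⌉} · cosh τ / (2⌈d⌉)!` with `d = dist(i,j)/R` and `τ = √‖X‖·|t|`. -/
theorem lieb_robinson_local_P_one_xp_px {V : Type*} [Fintype V] [DecidableEq V]
    (G : SimpleGraph V) (hconn : G.Connected) (R : ℕ) (hR : 1 ≤ R)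
    (X : Matrix V V ℝ) (hX : X.IsSymm)
    (hXloc : ∀ i j : V, R < G.dist i j → X i j = 0)
    (i j : V) (t : ℝ) :
    let τ : ℝ := Real.sqrt (l2OpNorm X) * |t|
    let c : ℕ := (⌈(G.dist i j : ℝ) / R⌉).toNat
    |Cxp X i j t| ≤ τ ^ (2 * c) * Real.cosh τ / (Nat.factorial (2 * c)) ∧
    |Cpx X i j t| ≤ τ ^ (2 * c) * Real.cosh τ / (Nat.factorial (2 * c)) :=
  lieb_robinson_local_P_one_xp_px_general G hconn R X hXloc i j t
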